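/- arXiv:1509.08569 — 4 statements merged into one kernel-verified Lean document; each statement's English description precedes it below -/
import Mathlib

section
/- Let u₀ ∈ H¹(ℝ) ∩ W^{1,4}(ℝ) be absolutely continuous and let u be the energy conservative solution of the Novikov equation with initial data u₀. Then on every bounded subset of [0,∞) × ℝ, u is Hölder continuous with exponent 3/4 in both variables t and x: there is a constant C such that |u(t,x) − u(s,y)| ≤ C(|t−s|^{3/4} + |x−y|^{3/4}) for all (t,x), (s,y) in that set. -/
open MeasureTheory Set
open scoped ENNReal

noncomputable section

/-- The kernel `p(x) = (1/2) e^{-|x|}`. -/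
def pker (x : ℝ) : ℝ := (1/2) * Real.exp (-|x|)

/-- The (a.e.) derivative of the kernel `p`. -/
def pker' (x : ℝ) : ℝ := -(1/2) * Real.sign x * Real.exp (-|x|)

/-- `P₁ = p ∗ ((3/2) u u_x² + u³)` (convolution in the space variable). -/
def NvP1 (u ux : ℝ → ℝ → ℝ) (t x : ℝ) : ℝ :=
  ∫ y, pker (x - y) * ((3/2) * u t y * (ux t y)^2 + (u t y)^3)

/-- `∂ₓP₁ = (∂ₓp) ∗ ((3/2) u u_x² + u³)`. -/
def NvdP1 (u ux : ℝ → ℝ → ℝ) (t x : ℝ) : ℝ :=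
  ∫ y, pker' (x - y) * ((3/2) * u t y * (ux t y)^2 + (u t y)^3)

/-- `P₂ = (1/2) p ∗ u_x³`. -/
def NvP2 (ux : ℝ → ℝ → ℝ) (t x : ℝ) : ℝ :=
  (1/2) * ∫ y, pker (x - y) * (ux t y)^3

/-- `∂ₓP₂ = (1/2) (∂ₓp) ∗ u_x³`. -/
def NvdP2 (ux : ℝ → ℝ → ℝ) (t x : ℝ) : ℝ :=
  (1/2) * ∫ y, pker' (x - y) * (ux t y)^3

/-- An energy conservative (weak) solution of the Novikov equation
`u_t + u² u_x + ∂ₓP₁ + P₂ = 0` with initial data `u₀`, with spatial weak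
derivative `ux` and associated family of Radon measures `μ`. -/
structure NovikovConsSol (u₀ : ℝ → ℝ) (u ux : ℝ → ℝ → ℝ) (μ : ℝ → Measure ℝ) : Prop where
  /-- For every `t ≥ 0`, `u(t,·) ∈ H¹(ℝ) ∩ W^{1,4}(ℝ)`: the `L²` and `L⁴` memberships. -/
  mem_L2 : ∀ t, 0 ≤ t → MemLp (u t) 2 volume
  mem_L2x : ∀ t, 0 ≤ t → MemLp (ux t) 2 volume
  mem_L4 : ∀ t, 0 ≤ t → MemLp (u t) 4 volume
  mem_L4x : ∀ t, 0 ≤ t → MemLp (ux t) 4 volume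
  /-- `u(t,·)` is absolutely continuous with derivative `ux(t,·)`. -/
  absCont : ∀ t, 0 ≤ t → ∀ x, u t x = u t 0 + ∫ y in (0:ℝ)..x, ux t y
  /-- `t ↦ u(t,·)` is Lipschitz continuous into `L⁴(ℝ)`. -/
  lipL4 : ∃ L : ℝ, ∀ s t, 0 ≤ s → 0 ≤ t →
    eLpNorm (fun x => u t x - u s x) 4 volume ≤ ENNReal.ofReal (L * |t - s|)
  /-- The initial condition `u(0,·) = u₀`. -/
  init : ∀ x, u 0 x = u₀ x
  /-- The weak form of the equation, tested against every `φ ∈ C¹_c([0,∞)×ℝ)`. -/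
  weakForm : ∀ φ : ℝ × ℝ → ℝ, ContDiff ℝ 1 φ → HasCompactSupport φ →
    (∫ t in Ici (0:ℝ), ∫ x : ℝ,
      (-(ux t x) * (fderiv ℝ φ (t, x) (1, 0) + (u t x)^2 * fderiv ℝ φ (t, x) (0, 1))
        + (-(3/2) * u t x * (ux t x)^2 - (u t x)^3 + NvP1 u ux t x + NvdP2 ux t x)
          * φ (t, x)))
    + (∫ x : ℝ, ux 0 x * φ (0, x)) = 0
  /-- The measures are finite (Radon). -/
  meas_finite : ∀ t, IsFiniteMeasure (μ t)
  /-- `t ↦ μ_t` is continuous for the weak topology of measures. -/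
  meas_cont : ∀ f : BoundedContinuousFunction ℝ ℝ, Continuous fun t => ∫ x, f x ∂(μ t)
  /-- The absolutely continuous part of `μ_t` has density `u_x⁴(t,·)` w.r.t. Lebesgue. -/
  meas_ac : ∀ t, 0 ≤ t →
    (μ t).rnDeriv volume =ᵐ[volume] fun x => ENNReal.ofReal ((ux t x)^4)
  /-- The measure-valued balance law for the energy `u_x⁴`. -/
  measBalance : ∀ φ : ℝ × ℝ → ℝ, ContDiff ℝ 1 φ → HasCompactSupport φ →
    (∫ t in Ici (0:ℝ),
      ((∫ x, (fderiv ℝ φ (t, x) (1, 0) + (u t x)^2 * fderiv ℝ φ (t, x) (0, 1)) ∂(μ t))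
        + ∫ x : ℝ, (4 * (u t x)^3 * (ux t x)^3
            - 4 * (ux t x)^3 * (NvP1 u ux t x + NvdP2 ux t x)) * φ (t, x)))
    - (∫ x : ℝ, (ux 0 x)^4 * φ (0, x)) = 0

/-!
In space, `u(t,·)` is the integral of `u_x(t,·) ∈ L⁴`, so Hölder's inequality on `[y, x]` gives
`|u(t,x) - u(t,y)| ≤ ‖u_x(t)‖_{L⁴} |x - y|^{3/4}`, and `‖u_x(t)‖_{L⁴}⁴` is at most the total mass of
`μ_t`, which weak continuity bounds on compact time intervals. In time, with `h = |t - s|`, average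
`|u(t,x) - u(s,x)| ≤ |u(t,x) - u(t,z)| + |u(t,z) - u(s,z)| + |u(s,z) - u(s,x)|` over `z ∈ (x, x + h]`:
the outer terms are `O(h^{3/4})` by the spatial estimate, and the middle one has mean at most
`h⁻¹ · ‖u(t) - u(s)‖_{L⁴} h^{3/4} ≤ L h^{3/4}` by Hölder and the `L⁴`-Lipschitz bound.
-/

open scoped Interval

theorem setLIntegral_enorm_le_eLpNorm_mul_measure_rpow {α E : Type*} [MeasurableSpace α]
    [NormedAddCommGroup E] {μ : Measure α} {f : α → E} {p : ℝ≥0∞} (hp : 1 ≤ p)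
    (hf : AEStronglyMeasurable f μ) (s : Set α) :
    ∫⁻ x in s, ‖f x‖ₑ ∂μ ≤ eLpNorm f p μ * μ s ^ (1 - 1 / p.toReal) := by
  have h := eLpNorm_le_eLpNorm_mul_rpow_measure_univ (μ := μ.restrict s) hp hf.restrict
  rw [eLpNorm_one_eq_lintegral_enorm, Measure.restrict_apply_univ, ENNReal.toReal_one,
    div_one] at h
  exact h.trans (mul_le_mul_left (eLpNorm_mono_measure f Measure.restrict_le_self) _)

theorem norm_intervalIntegral_le_mul_rpow_of_eLpNorm_le {E : Type*} [NormedAddCommGroup E]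
    [NormedSpace ℝ E] {g : ℝ → E} {p : ℝ≥0∞} (hp : 1 ≤ p)
    (hg : AEStronglyMeasurable g volume) {K : ℝ} (hK : 0 ≤ K)
    (hgK : eLpNorm g p volume ≤ ENNReal.ofReal K) (a b : ℝ) :
    ‖∫ y in a..b, g y‖ ≤ K * |b - a| ^ (1 - 1 / p.toReal) := by
  have hexp : 0 ≤ 1 - 1 / p.toReal := by
    rcases eq_or_ne p ∞ with rfl | hp_top
    · simp
    have : 1 ≤ p.toReal := ENNReal.toReal_one ▸ ENNReal.toReal_mono hp_top hp
    exact sub_nonneg.2 (div_le_one_of_le₀ this ENNReal.toReal_nonneg)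
  have hvol : volume (Ι a b) = ENNReal.ofReal |b - a| := by
    rw [uIoc, Real.volume_Ioc, max_sub_min_eq_abs]
  rw [intervalIntegral.norm_integral_eq_norm_integral_uIoc,
    ← ENNReal.ofReal_le_ofReal_iff (by positivity), ofReal_norm]
  calc ‖∫ y in Ι a b, g y‖ₑ
      ≤ ∫⁻ y in Ι a b, ‖g y‖ₑ := enorm_integral_le_lintegral_enorm _
    _ ≤ eLpNorm g p volume * volume (Ι a b) ^ (1 - 1 / p.toReal) :=
        setLIntegral_enorm_le_eLpNorm_mul_measure_rpow hp hg _
    _ ≤ ENNReal.ofReal K * ENNReal.ofReal (|b - a| ^ (1 - 1 / p.toReal)) := by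
        rw [hvol, ENNReal.ofReal_rpow_of_nonneg (abs_nonneg _) hexp]
        gcongr
    _ = ENNReal.ofReal (K * |b - a| ^ (1 - 1 / p.toReal)) := (ENNReal.ofReal_mul hK).symm

theorem eLpNorm_le_measure_univ_rpow_of_rnDeriv_ae_eq {α E : Type*} [MeasurableSpace α]
    [NormedAddCommGroup E] {μ ν : Measure α} {g : α → E} {p : ℝ≥0∞} (hp0 : p ≠ 0)
    (hp : p ≠ ∞) (h : ν.rnDeriv μ =ᵐ[μ] fun x => ‖g x‖ₑ ^ p.toReal) :
    eLpNorm g p μ ≤ ν univ ^ (1 / p.toReal) := by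
  rw [eLpNorm_eq_lintegral_rpow_enorm_toReal hp0 hp]
  gcongr
  calc ∫⁻ x, ‖g x‖ₑ ^ p.toReal ∂μ = ∫⁻ x, ν.rnDeriv μ x ∂μ := lintegral_congr_ae h.symm
    _ ≤ ν univ := Measure.lintegral_rnDeriv_le

theorem IsCompact.exists_measure_univ_le {T α : Type*} [TopologicalSpace T]
    [MeasurableSpace α] [TopologicalSpace α] {μ : T → Measure α}
    [∀ t, IsFiniteMeasure (μ t)]
    (hμ : ∀ f : BoundedContinuousFunction α ℝ, Continuous fun t => ∫ x, f x ∂(μ t))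
    {s : Set T} (hs : IsCompact s) : ∃ M, ∀ t ∈ s, μ t univ ≤ ENNReal.ofReal M := by
  obtain ⟨M, hM⟩ := hs.exists_bound_of_continuousOn (hμ 1).continuousOn
  refine ⟨M, fun t ht => ?_⟩
  have := hM t ht
  simp only [BoundedContinuousFunction.coe_one, Pi.one_apply, integral_const, smul_eq_mul,
    mul_one, Real.norm_eq_abs, abs_of_nonneg measureReal_nonneg] at this
  exact (ENNReal.le_ofReal_iff_toReal_le (MeasureTheory.measure_ne_top (μ t) univ)
    (measureReal_nonneg.trans this)).2 this

theorem abs_sub_le_of_holder_of_eLpNorm_sub_le {v w : ℝ → ℝ} {p : ℝ≥0∞} (hp : 1 ≤ p)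
    {K α D h : ℝ} (hα : 0 ≤ α) (hv : ∀ a b, |v a - v b| ≤ K * |a - b| ^ α)
    (hw : ∀ a b, |w a - w b| ≤ K * |a - b| ^ α) (hvw : AEStronglyMeasurable (v - w) volume)
    (hD : 0 ≤ D) (hvwD : eLpNorm (v - w) p volume ≤ ENNReal.ofReal D) (hh : 0 < h) (x : ℝ) :
    |v x - w x| ≤ 2 * K * h ^ α + D * h ^ (-(1 / p.toReal)) := by
  have hK : 0 ≤ K := by simpa using (abs_nonneg _).trans (hv 1 0)
  set E := Ioc x (x + h)
  have hvolE : volume E = ENNReal.ofReal h := by simp [E]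
  have hpoint : ∀ z ∈ E, ENNReal.ofReal |v x - w x|
      ≤ ENNReal.ofReal (2 * K * h ^ α) + ‖(v - w) z‖ₑ := by
    intro z ⟨hxz, hzx⟩
    have hdist : |x - z| ^ α ≤ h ^ α := by
      gcongr
      rw [abs_sub_comm, abs_of_pos (by linarith)]
      linarith
    rw [Real.enorm_eq_ofReal_abs, ← ENNReal.ofReal_add (by positivity) (abs_nonneg _)]
    gcongr
    calc |v x - w x| = |(v x - v z) + (w z - w x) + (v - w) z| := by
          rw [Pi.sub_apply]; ring_nf
      _ ≤ |v x - v z| + |w z - w x| + |(v - w) z| := abs_add_three _ _ _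
      _ ≤ K * |x - z| ^ α + K * |z - x| ^ α + |(v - w) z| := by
          gcongr
          exacts [hv x z, hw z x]
      _ ≤ 2 * K * h ^ α + |(v - w) z| := by
          rw [abs_sub_comm z]
          nlinarith [mul_le_mul_of_nonneg_left hdist hK]
  have hmain : ENNReal.ofReal |v x - w x| * ENNReal.ofReal h
      ≤ ENNReal.ofReal ((2 * K * h ^ α + D * h ^ (-(1 / p.toReal))) * h) := by
    calc ENNReal.ofReal |v x - w x| * ENNReal.ofReal h
        = ∫⁻ _ in E, ENNReal.ofReal |v x - w x| := by rw [setLIntegral_const, hvolE]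
      _ ≤ ∫⁻ z in E, (ENNReal.ofReal (2 * K * h ^ α) + ‖(v - w) z‖ₑ) :=
          setLIntegral_mono' measurableSet_Ioc hpoint
      _ = ENNReal.ofReal (2 * K * h ^ α) * ENNReal.ofReal h + ∫⁻ z in E, ‖(v - w) z‖ₑ := by
          rw [lintegral_add_left measurable_const, setLIntegral_const, hvolE]
      _ ≤ ENNReal.ofReal (2 * K * h ^ α) * ENNReal.ofReal h
            + eLpNorm (v - w) p volume * volume E ^ (1 - 1 / p.toReal) := by
          gcongr
          exact setLIntegral_enorm_le_eLpNorm_mul_measure_rpow hp hvw E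
      _ ≤ ENNReal.ofReal (2 * K * h ^ α) * ENNReal.ofReal h
            + ENNReal.ofReal D * ENNReal.ofReal h ^ (1 - 1 / p.toReal) := by
          rw [hvolE]
          gcongr
      _ = ENNReal.ofReal ((2 * K * h ^ α + D * h ^ (-(1 / p.toReal))) * h) := by
          rw [ENNReal.ofReal_rpow_of_pos hh, ← ENNReal.ofReal_mul (by positivity),
            ← ENNReal.ofReal_mul hD, ← ENNReal.ofReal_add (by positivity) (by positivity),
            sub_eq_neg_add, Real.rpow_add_one hh.ne']
          ring_nf
  rw [← ENNReal.ofReal_mul (abs_nonneg _), ENNReal.ofReal_le_ofReal_iff (by positivity)] at hmain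
  exact le_of_mul_le_mul_right hmain hh

theorem Bornology.IsBounded.exists_subset_Icc_prod_univ {β : Type*} [SeminormedAddCommGroup β]
    {S : Set (ℝ × β)} (hSb : IsBounded S) {a : ℝ} (hS : S ⊆ Ici a ×ˢ univ) :
    ∃ r, S ⊆ Icc a r ×ˢ univ := by
  obtain ⟨r, hr⟩ := hSb.subset_closedBall 0
  refine ⟨r, fun q hq => ⟨⟨(hS hq).1, ?_⟩, trivial⟩⟩
  exact (le_abs_self _).trans ((norm_fst_le q).trans (mem_closedBall_zero_iff.1 (hr hq)))

namespace NovikovConsSol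

variable {u₀ : ℝ → ℝ} {u ux : ℝ → ℝ → ℝ} {μ : ℝ → Measure ℝ}

theorem exists_eLpNorm_ux_le (hu : NovikovConsSol u₀ u ux μ) (r : ℝ) :
    ∃ K, 0 ≤ K ∧ ∀ t ∈ Icc 0 r, eLpNorm (ux t) 4 volume ≤ ENNReal.ofReal K := by
  have := hu.meas_finite
  obtain ⟨M, hM⟩ := (isCompact_Icc (a := 0) (b := r)).exists_measure_univ_le hu.meas_cont
  refine ⟨max M 0 ^ (1 / 4 : ℝ), by positivity, fun t ht => ?_⟩
  have hrn : (μ t).rnDeriv volume =ᵐ[volume] fun x => ‖ux t x‖ₑ ^ (4 : ℝ≥0∞).toReal := by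
    filter_upwards [hu.meas_ac t ht.1] with x hx
    rw [hx, Real.enorm_eq_ofReal_abs, ENNReal.toReal_ofNat, ENNReal.rpow_ofNat,
      ← ENNReal.ofReal_pow (abs_nonneg _), pow_abs, abs_of_nonneg (by positivity)]
  calc eLpNorm (ux t) 4 volume ≤ μ t univ ^ (1 / (4 : ℝ≥0∞).toReal) :=
        eLpNorm_le_measure_univ_rpow_of_rnDeriv_ae_eq (by norm_num) (by norm_num) hrn
    _ ≤ ENNReal.ofReal (max M 0) ^ (1 / 4 : ℝ) := by
        rw [ENNReal.toReal_ofNat]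
        gcongr
        exact (hM t ht).trans (ENNReal.ofReal_le_ofReal (le_max_left _ _))
    _ = ENNReal.ofReal (max M 0 ^ (1 / 4 : ℝ)) :=
        ENNReal.ofReal_rpow_of_nonneg (le_max_right _ _) (by norm_num)

theorem exists_lipschitz_nonneg (hu : NovikovConsSol u₀ u ux μ) :
    ∃ L, 0 ≤ L ∧ ∀ s t, 0 ≤ s → 0 ≤ t →
      eLpNorm (u t - u s) 4 volume ≤ ENNReal.ofReal (L * |t - s|) := by
  obtain ⟨L, hL⟩ := hu.lipL4
  exact ⟨|L|, abs_nonneg L, fun s t hs ht => (hL s t hs ht).trans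
    (ENNReal.ofReal_le_ofReal (by gcongr; exact le_abs_self L))⟩

theorem abs_sub_le_of_eLpNorm_ux_le (hu : NovikovConsSol u₀ u ux μ) {t : ℝ} (ht : 0 ≤ t)
    {K : ℝ} (hK : 0 ≤ K) (huxK : eLpNorm (ux t) 4 volume ≤ ENNReal.ofReal K) (a b : ℝ) :
    |u t a - u t b| ≤ K * |a - b| ^ ((3 : ℝ) / 4) := by
  have hint (c : ℝ) : IntervalIntegrable (ux t) volume 0 c :=
    (((hu.mem_L4x t ht).locallyIntegrable (by norm_num)).integrableOn_isCompact
      isCompact_uIcc).intervalIntegrable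
  have hdiff : u t a - u t b = ∫ y in b..a, ux t y := by
    rw [hu.absCont t ht a, hu.absCont t ht b, add_sub_add_left_eq_sub,
      intervalIntegral.integral_interval_sub_left (hint a) (hint b)]
  rw [hdiff, ← Real.norm_eq_abs]
  convert norm_intervalIntegral_le_mul_rpow_of_eLpNorm_le (p := 4) (by norm_num)
    (hu.mem_L4x t ht).1 hK huxK b a using 3
  norm_num

theorem abs_sub_le_of_eLpNorm_sub_le (hu : NovikovConsSol u₀ u ux μ) {s t : ℝ} (hs : 0 ≤ s)
    (ht : 0 ≤ t) {K L : ℝ} (hK : 0 ≤ K) (husK : eLpNorm (ux s) 4 volume ≤ ENNReal.ofReal K)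
    (hutK : eLpNorm (ux t) 4 volume ≤ ENNReal.ofReal K) (hL : 0 ≤ L)
    (hLip : eLpNorm (u t - u s) 4 volume ≤ ENNReal.ofReal (L * |t - s|)) (x : ℝ) :
    |u t x - u s x| ≤ (2 * K + L) * |t - s| ^ ((3 : ℝ) / 4) := by
  rcases eq_or_ne t s with rfl | hne
  · simp
  have hh : 0 < |t - s| := abs_pos.2 (sub_ne_zero.2 hne)
  have hrpow : |t - s| ^ ((3 : ℝ) / 4) = |t - s| ^ (-(1 / 4 : ℝ)) * |t - s| := by
    rw [← Real.rpow_add_one hh.ne']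
    norm_num
  calc |u t x - u s x|
      ≤ 2 * K * |t - s| ^ ((3 : ℝ) / 4) + L * |t - s| * |t - s| ^ (-(1 / (4 : ℝ≥0∞).toReal)) :=
        abs_sub_le_of_holder_of_eLpNorm_sub_le (by norm_num) (by norm_num)
          (hu.abs_sub_le_of_eLpNorm_ux_le ht hK hutK) (hu.abs_sub_le_of_eLpNorm_ux_le hs hK husK)
          ((hu.mem_L4 t ht).1.sub (hu.mem_L4 s hs).1) (by positivity) hLip hh x
    _ = (2 * K + L) * |t - s| ^ ((3 : ℝ) / 4) := by
        rw [hrpow, ENNReal.toReal_ofNat]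
        ring

end NovikovConsSol

theorem novikov_holder_continuity_general (u₀ : ℝ → ℝ)
    (u ux : ℝ → ℝ → ℝ) (μ : ℝ → Measure ℝ)
    (hu : NovikovConsSol u₀ u ux μ) :
    ∀ S : Set (ℝ × ℝ), S ⊆ (Ici (0:ℝ)) ×ˢ (univ : Set ℝ) → Bornology.IsBounded S →
      ∃ C : ℝ, ∀ t x s y, (t, x) ∈ S → (s, y) ∈ S →
        |u t x - u s y| ≤ C * (|t - s| ^ ((3:ℝ)/4) + |x - y| ^ ((3:ℝ)/4)) := by
  intro S hS hSb
  obtain ⟨r, hr⟩ := hSb.exists_subset_Icc_prod_univ hS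
  obtain ⟨K, hK, hux⟩ := hu.exists_eLpNorm_ux_le r
  obtain ⟨L, hL, hLip⟩ := hu.exists_lipschitz_nonneg
  refine ⟨2 * K + L, fun t x s y htx hsy => ?_⟩
  have ht : t ∈ Icc 0 r := (hr htx).1
  have hs : s ∈ Icc 0 r := (hr hsy).1
  calc |u t x - u s y| ≤ |u t x - u s x| + |u s x - u s y| := abs_sub_le _ _ _
    _ ≤ (2 * K + L) * |t - s| ^ ((3 : ℝ) / 4) + K * |x - y| ^ ((3 : ℝ) / 4) :=
        add_le_add
          (hu.abs_sub_le_of_eLpNorm_sub_le hs.1 ht.1 hK (hux s hs) (hux t ht) hL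
            (hLip s t hs.1 ht.1) x)
          (hu.abs_sub_le_of_eLpNorm_ux_le hs.1 hK (hux s hs) x y)
    _ ≤ (2 * K + L) * (|t - s| ^ ((3 : ℝ) / 4) + |x - y| ^ ((3 : ℝ) / 4)) := by
        have : 0 ≤ |x - y| ^ ((3 : ℝ) / 4) := by positivity
        nlinarith

/-- **Hölder continuity with exponent `3/4` of the conservative solution.**
Let `u₀ ∈ H¹(ℝ) ∩ W^{1,4}(ℝ)` be absolutely continuous and let `u` be the energy
conservative solution of the Novikov equation with initial data `u₀`. Then on every
bounded subset of `[0,∞) × ℝ` the function `u` is Hölder continuous with exponent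
`3/4` in both `t` and `x`: there is a constant `C` with
`|u(t,x) − u(s,y)| ≤ C (|t−s|^{3/4} + |x−y|^{3/4})` on that set. -/
theorem novikov_holder_continuity (u₀ u₀' : ℝ → ℝ)
    (h2 : MemLp u₀ 2 volume) (h2' : MemLp u₀' 2 volume)
    (h4 : MemLp u₀ 4 volume) (h4' : MemLp u₀' 4 volume)
    (hAC : ∀ x, u₀ x = u₀ 0 + ∫ y in (0:ℝ)..x, u₀' y)
    (u ux : ℝ → ℝ → ℝ) (μ : ℝ → Measure ℝ)
    (hu : NovikovConsSol u₀ u ux μ) :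
    ∀ S : Set (ℝ × ℝ), S ⊆ (Ici (0:ℝ)) ×ˢ (univ : Set ℝ) → Bornology.IsBounded S →
      ∃ C : ℝ, ∀ t x s y, (t, x) ∈ S → (s, y) ∈ S →
        |u t x - u s y| ≤ C * (|t - s| ^ ((3:ℝ)/4) + |x - y| ^ ((3:ℝ)/4)) :=
  novikov_holder_continuity_general u₀ u ux μ hu
end
end

section
/- Let u ∈ H¹(ℝ) with weak derivative u' ∈ L⁴(ℝ), and set E := ∫ℝ (u² + u'²) dx and F := ∫ℝ ( u⁴ + 2u²u'² − (1/3)u'⁴ ) dx. Then ‖u'‖⁴_{L⁴(ℝ)} = ∫ℝ u'⁴ dx ≤ 3( 2E² − F ). In particular 2E² − F ≥ 0. -/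
/-!
Since `u` is absolutely continuous, `u b ² - u a ² = ∫ a..b, 2 u u'`, and
`|2 u u'| ≤ u² + u'²` gives `u x ² ≤ u y ² + E` for all `x`, `y`. As `u²` is integrable
on the infinite line it has no positive lower bound, so `u x ² ≤ E` everywhere (the
Sobolev inequality). Then pointwise `u⁴ + 2 u² u'² = u² (u² + 2 u'²) ≤ 2 E (u² + u'²)`,
and integrating gives `F + (1/3) ∫ u'⁴ ≤ 2 E²`.
-/

open MeasureTheory Set
open scoped Interval

theorem MeasureTheory.LocallyIntegrable.intervalIntegrable {E : Type*} [NormedAddCommGroup E]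
    {μ : Measure ℝ} [IsLocallyFiniteMeasure μ] {f : ℝ → E} (hf : LocallyIntegrable f μ)
    (a b : ℝ) : IntervalIntegrable f μ a b :=
  (hf.integrableOn_isCompact isCompact_uIcc).intervalIntegrable

theorem nonpos_of_integrable_of_forall_le {α : Type*} [MeasurableSpace α] {μ : Measure α}
    (hμ : ¬IsFiniteMeasure μ) {g : α → ℝ} (hg : Integrable g μ) {c : ℝ}
    (hc : ∀ x, c ≤ g x) : c ≤ 0 := by
  by_contra! hc0
  have hconst : Integrable (fun _ ↦ c) μ :=
    hg.mono aestronglyMeasurable_const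
      (ae_of_all _ fun x ↦ by
        simpa [abs_of_pos hc0, abs_of_pos (hc0.trans_le (hc x))] using hc x)
  exact (integrable_const_iff.mp hconst).elim hc0.ne' hμ

theorem norm_intervalIntegral_le_integral {E : Type*} [NormedAddCommGroup E] [NormedSpace ℝ E]
    {μ : Measure ℝ} {f : ℝ → E} {g : ℝ → ℝ} (hg : Integrable g μ) (hfg : ∀ x, ‖f x‖ ≤ g x)
    (a b : ℝ) : ‖∫ x in a..b, f x ∂μ‖ ≤ ∫ x, g x ∂μ :=
  calc ‖∫ x in a..b, f x ∂μ‖ ≤ ∫ x in Ι a b, ‖f x‖ ∂μ :=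
        intervalIntegral.norm_integral_le_integral_norm_uIoc
    _ ≤ ∫ x in Ι a b, g x ∂μ :=
        integral_mono_of_nonneg (ae_of_all _ fun _ ↦ norm_nonneg _) hg.integrableOn
          (ae_of_all _ hfg)
    _ ≤ ∫ x, g x ∂μ :=
        setIntegral_le_integral hg (ae_of_all _ fun x ↦ (norm_nonneg _).trans (hfg x))

section AbsolutelyContinuousPrimitive

variable {u u' : ℝ → ℝ} {x₀ : ℝ}

theorem eq_add_integral_of_eq_add_integral (hu' : LocallyIntegrable u' volume)
    (hAC : ∀ x, u x = u x₀ + ∫ y in x₀..x, u' y) (a x : ℝ) :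
    u x = u a + ∫ y in a..x, u' y := by
  rw [hAC x, hAC a, add_assoc, intervalIntegral.integral_add_adjacent_intervals]
  · exact hu'.intervalIntegrable x₀ a
  · exact hu'.intervalIntegrable a x

theorem absolutelyContinuousOnInterval_of_eq_add_integral (hu' : LocallyIntegrable u' volume)
    (hAC : ∀ x, u x = u x₀ + ∫ y in x₀..x, u' y) (a b : ℝ) :
    AbsolutelyContinuousOnInterval u a b := by
  rw [funext (eq_add_integral_of_eq_add_integral hu' hAC a)]
  exact (contDiffOn_const.absolutelyContinuousOnInterval).fun_add
    ((hu'.intervalIntegrable a b).absolutelyContinuousOnInterval_intervalIntegral left_mem_uIcc)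

theorem ae_hasDerivAt_of_eq_add_integral (hu' : LocallyIntegrable u' volume)
    (hAC : ∀ x, u x = u x₀ + ∫ y in x₀..x, u' y) : ∀ᵐ x, HasDerivAt u (u' x) x := by
  filter_upwards [LocallyIntegrable.ae_hasDerivAt_integral hu'] with x hx
  rw [funext hAC]
  exact (hx x₀).const_add _

theorem sq_sub_sq_eq_integral (hu' : LocallyIntegrable u' volume)
    (hAC : ∀ x, u x = u x₀ + ∫ y in x₀..x, u' y) (a b : ℝ) :
    u b ^ 2 - u a ^ 2 = ∫ t in a..b, 2 * u t * u' t := by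
  have hu := absolutelyContinuousOnInterval_of_eq_add_integral hu' hAC a b
  rw [sq, sq, ← hu.integral_deriv_mul_eq_sub hu]
  refine intervalIntegral.integral_congr_ae ?_
  filter_upwards [ae_hasDerivAt_of_eq_add_integral hu' hAC] with t ht _
  rw [ht.deriv]
  ring

theorem sq_le_sq_add_integral_sq_add_sq (hu' : LocallyIntegrable u' volume)
    (hAC : ∀ x, u x = u x₀ + ∫ y in x₀..x, u' y) (hu2 : Integrable (fun x ↦ u x ^ 2))
    (hu'2 : Integrable (fun x ↦ u' x ^ 2)) (a b : ℝ) :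
    u b ^ 2 ≤ u a ^ 2 + ∫ x, (u x ^ 2 + u' x ^ 2) := by
  have hbound : ∀ x, ‖2 * u x * u' x‖ ≤ u x ^ 2 + u' x ^ 2 := fun x ↦ by
    rw [Real.norm_eq_abs, abs_mul, abs_mul, abs_two, ← sq_abs (u x), ← sq_abs (u' x)]
    exact two_mul_le_add_sq _ _
  have h := norm_intervalIntegral_le_integral (g := fun x ↦ u x ^ 2 + u' x ^ 2)
    (hu2.add hu'2) hbound a b
  rw [← sq_sub_sq_eq_integral hu' hAC, Real.norm_eq_abs] at h
  linarith [le_abs_self (u b ^ 2 - u a ^ 2)]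

theorem sq_le_integral_sq_add_sq (hu' : LocallyIntegrable u' volume)
    (hAC : ∀ x, u x = u x₀ + ∫ y in x₀..x, u' y) (hu2 : Integrable (fun x ↦ u x ^ 2))
    (hu'2 : Integrable (fun x ↦ u' x ^ 2)) (x : ℝ) :
    u x ^ 2 ≤ ∫ x, (u x ^ 2 + u' x ^ 2) := by
  have := nonpos_of_integrable_of_forall_le (by simp [not_isFiniteMeasure_iff]) hu2
    (c := u x ^ 2 - ∫ x, (u x ^ 2 + u' x ^ 2))
    fun y ↦ by linarith [sq_le_sq_add_integral_sq_add_sq hu' hAC hu2 hu'2 y x]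
  linarith

end AbsolutelyContinuousPrimitive

/-- **`L⁴` control of the derivative by the two energies.**
Let `u ∈ H¹(ℝ)` with weak derivative `u' ∈ L⁴(ℝ)`, and set
`E := ∫ (u² + u'²)` and `F := ∫ (u⁴ + 2u²u'² − (1/3)u'⁴)`. Then
`‖u'‖⁴_{L⁴} = ∫ u'⁴ ≤ 3(2E² − F)`; in particular `2E² − F ≥ 0`. -/
theorem deriv_L4_control (u u' : ℝ → ℝ)
    (h2 : MemLp u 2 volume) (h2' : MemLp u' 2 volume) (h4' : MemLp u' 4 volume)
    (hAC : ∀ x, u x = u 0 + ∫ y in (0:ℝ)..x, u' y)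
    (E F : ℝ)
    (hE : E = ∫ x, ((u x)^2 + (u' x)^2))
    (hF : F = ∫ x, ((u x)^4 + 2 * (u x)^2 * (u' x)^2 - (1/3) * (u' x)^4)) :
    (∫ x, (u' x)^4) ≤ 3 * (2 * E^2 - F) ∧ 0 ≤ 2 * E^2 - F := by
  have hu2 := h2.integrable_sq
  have hu'2 := h2'.integrable_sq
  have hsup : ∀ x, u x ^ 2 ≤ E :=
    hE ▸ sq_le_integral_sq_add_sq (h2'.locallyIntegrable one_le_two) hAC hu2 hu'2
  have hu'4 : Integrable (fun x ↦ u' x ^ 4) := by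
    simpa [Real.norm_eq_abs, (by decide : Even 4).pow_abs] using
      h4'.integrable_norm_pow (p := 4) (by norm_num)
  have hQ : Integrable (fun x ↦ u x ^ 2 * (u x ^ 2 + 2 * u' x ^ 2)) :=
    (hu2.add (hu'2.const_mul 2)).bdd_mul (h2.1.pow 2)
      (ae_of_all _ fun x ↦ by simpa [Real.norm_eq_abs] using hsup x)
  have hkey : F + 1 / 3 * ∫ x, u' x ^ 4 ≤ 2 * E ^ 2 :=
    calc F + 1 / 3 * ∫ x, u' x ^ 4 = ∫ x, u x ^ 2 * (u x ^ 2 + 2 * u' x ^ 2) := by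
          have : (fun x ↦ u x ^ 4 + 2 * u x ^ 2 * u' x ^ 2 - 1 / 3 * u' x ^ 4)
              = fun x ↦ u x ^ 2 * (u x ^ 2 + 2 * u' x ^ 2) - 1 / 3 * u' x ^ 4 := by
            funext x; ring
          rw [hF, this, integral_sub hQ (hu'4.const_mul _), integral_const_mul]
          ring
      _ ≤ ∫ x, 2 * E * (u x ^ 2 + u' x ^ 2) :=
          integral_mono hQ ((hu2.add hu'2).const_mul _) fun x ↦ by
            nlinarith [hsup x, sq_nonneg (u x), sq_nonneg (u' x)]
      _ = 2 * E ^ 2 := by rw [integral_const_mul, ← hE]; ring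
  have hW : 0 ≤ ∫ x, u' x ^ 4 := integral_nonneg fun x ↦ by positivity
  constructor <;> linarith
end

section
/- Let u ∈ H¹(ℝ) with weak derivative u' ∈ L⁴(ℝ), and set E := ∫ℝ (u² + u'²) dx and F := ∫ℝ ( u⁴ + 2u²u'² − (1/3)u'⁴ ) dx. Then ‖u'‖³_{L³(ℝ)} = ∫ℝ |u'|³ dx ≤ √( 3E(2E² − F) ). -/
/-!
Since `u` is a primitive of `u'`, it is absolutely continuous and
`u z ^ 2 - u y ^ 2 = 2 ∫_y^z u u' ≤ ∫ (u ^ 2 + u' ^ 2) = E`; as `u ^ 2` is integrable, `u y ^ 2`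
cannot stay bounded away from `0` as `y → -∞`, so `u ^ 2 ≤ E` everywhere. This gives
`∫ u ^ 4 + 2 ∫ u ^ 2 u' ^ 2 ≤ E (∫ u ^ 2 + 2 ∫ u' ^ 2) ≤ 2 E ^ 2`, i.e. `∫ u' ^ 4 ≤ 3 (2 E ^ 2 - F)`,
and Cauchy–Schwarz `∫ |u'| ^ 3 ≤ ‖u'‖₂ ‖u'‖₄ ^ 2` concludes.
-/

open MeasureTheory Set
open scoped ENNReal

lemma sq_sub_sq_eq_two_mul_integral_mul {u f : ℝ → ℝ} (hf : LocallyIntegrable f volume) {c : ℝ}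
    (hu : ∀ x, u x = u c + ∫ t in c..x, f t) (a b : ℝ) :
    u b ^ 2 - u a ^ 2 = 2 * ∫ t in a..b, u t * f t := by
  have hfi : ∀ x y : ℝ, IntervalIntegrable f volume x y := fun x y =>
    (hf.integrableOn_isCompact isCompact_uIcc).intervalIntegrable
  have hua : u = fun x => u a + ∫ t in a..x, f t := by
    funext x
    rw [hu x, hu a, add_assoc, intervalIntegral.integral_add_adjacent_intervals (hfi c a) (hfi a x)]
  have hac : AbsolutelyContinuousOnInterval u a b := by
    rw [hua]
    exact contDiffOn_const.absolutelyContinuousOnInterval.fun_add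
      ((hfi a b).absolutelyContinuousOnInterval_intervalIntegral left_mem_uIcc)
  have hderiv : ∀ᵐ x, deriv u x = f x := by
    filter_upwards [LocallyIntegrable.ae_hasDerivAt_integral hf] with x hx
    rw [hua]
    exact ((hx a).const_add (u a)).deriv
  rw [← intervalIntegral.integral_const_mul, sq, sq, ← hac.integral_deriv_mul_eq_sub hac]
  refine intervalIntegral.integral_congr_ae ?_
  filter_upwards [hderiv] with x hx _
  rw [hx]; ring

section
variable {α : Type*} [MeasurableSpace α] {μ : Measure α}

lemma le_of_forall_le_add_of_integrableOn {g : α → ℝ} {s : Set α} (hs : MeasurableSet s)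
    (hμs : μ s = ∞) (hg : IntegrableOn g s μ) {c K : ℝ} (h : ∀ y ∈ s, c ≤ g y + K) : c ≤ K := by
  by_contra! hKc
  have hconst : IntegrableOn (fun _ => c - K) s μ := by
    refine hg.mono' aestronglyMeasurable_const ((ae_restrict_iff' hs).2 (ae_of_all _ fun y hy => ?_))
    rw [Real.norm_of_nonneg (sub_nonneg.2 hKc.le)]
    linarith [h y hy]
  rcases (integrableOn_const_iff).1 hconst with hzero | hfin
  · simp [sub_eq_zero, hKc.ne'] at hzero
  · exact hfin.ne hμs

lemma integral_abs_pow_three_le_sqrt_mul_sqrt {f : α → ℝ} (h2 : MemLp f 2 μ) (h4 : MemLp f 4 μ) :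
    ∫ x, |f x| ^ 3 ∂μ ≤ √(∫ x, f x ^ 2 ∂μ) * √(∫ x, f x ^ 4 ∂μ) := by
  have hsq : MemLp (fun x => f x ^ 2) 2 μ := by
    refine (memLp_two_iff_integrable_sq (h4.1.pow 2)).2 ?_
    simpa [← pow_mul, Even.pow_abs ⟨2, rfl⟩] using h4.integrable_norm_pow (p := 4) (by norm_num)
  calc ∫ x, |f x| ^ 3 ∂μ = ∫ x, |f x| * f x ^ 2 ∂μ := by
        congr 1 with x
        rw [← sq_abs (f x)]
        ring
    _ ≤ (∫ x, |f x| ^ (2 : ℝ) ∂μ) ^ (1 / (2 : ℝ)) * (∫ x, (f x ^ 2) ^ (2 : ℝ) ∂μ) ^ (1 / (2 : ℝ)) :=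
        integral_mul_le_Lp_mul_Lq_of_nonneg Real.HolderConjugate.two_two
          (ae_of_all _ fun x => abs_nonneg _) (ae_of_all _ fun x => sq_nonneg _)
          (by rw [ENNReal.ofReal_ofNat]; exact h2.abs) (by rw [ENNReal.ofReal_ofNat]; exact hsq)
    _ = √(∫ x, f x ^ 2 ∂μ) * √(∫ x, f x ^ 4 ∂μ) := by
        simp only [← Real.sqrt_eq_rpow, Real.rpow_two, sq_abs, ← pow_mul]

end

section
variable {u u' : ℝ → ℝ} (h2 : MemLp u 2 volume) (h2' : MemLp u' 2 volume)
  (hAC : ∀ x, u x = u 0 + ∫ y in (0:ℝ)..x, u' y)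
include h2 h2' hAC

lemma sq_le_integral_sq_add_sq_s15 (z : ℝ) : u z ^ 2 ≤ ∫ x, (u x ^ 2 + u' x ^ 2) := by
  have hint := h2.integrable_sq.add h2'.integrable_sq
  refine le_of_forall_le_add_of_integrableOn measurableSet_Iic Real.volume_Iic
    h2.integrable_sq.integrableOn (fun y (hy : y ≤ z) => ?_)
  have hftc := sq_sub_sq_eq_two_mul_integral_mul (h2'.locallyIntegrable one_le_two) hAC y z
  have hmul : 2 * ∫ t in y..z, u t * u' t ≤ ∫ t in y..z, (u t ^ 2 + u' t ^ 2) := by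
    rw [← intervalIntegral.integral_const_mul]
    refine intervalIntegral.integral_mono_on hy ?_ hint.intervalIntegrable
      fun t _ => by linarith [two_mul_le_add_sq (u t) (u' t)]
    exact ((h2.integrable_mul h2').const_mul 2).intervalIntegrable
  have hrestrict : ∫ t in y..z, (u t ^ 2 + u' t ^ 2) ≤ ∫ x, (u x ^ 2 + u' x ^ 2) := by
    rw [intervalIntegral.integral_of_le hy]
    exact setIntegral_le_integral hint (ae_of_all _ fun t => by positivity)
  linarith

lemma integral_deriv_pow_four_le (h4' : MemLp u' 4 volume) :
    ∫ x, u' x ^ 4 ≤ 3 * (2 * (∫ x, (u x ^ 2 + u' x ^ 2)) ^ 2 -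
      ∫ x, ((u x)^4 + 2 * (u x)^2 * (u' x)^2 - (1/3) * (u' x)^4)) := by
  set E := ∫ x, (u x ^ 2 + u' x ^ 2)
  have hsup := sq_le_integral_sq_add_sq_s15 h2 h2' hAC
  have hsup_norm : ∀ᵐ x, ‖u x ^ 2‖ ≤ E := ae_of_all _ fun x => by
    rw [Real.norm_of_nonneg (sq_nonneg _)]
    exact hsup x
  have iu2 := h2.integrable_sq
  have iu'2 := h2'.integrable_sq
  have iu4 : Integrable (fun x => u x ^ 2 * u x ^ 2) := iu2.bdd_mul (h2.1.pow 2) hsup_norm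
  have iuu' : Integrable (fun x => u x ^ 2 * u' x ^ 2) := iu'2.bdd_mul (h2.1.pow 2) hsup_norm
  have iu'4 : Integrable (fun x => u' x ^ 4) := by
    simpa [Even.pow_abs ⟨2, rfl⟩] using h4'.integrable_norm_pow (p := 4) (by norm_num)
  have hF : ∫ x, ((u x)^4 + 2 * (u x)^2 * (u' x)^2 - (1/3) * (u' x)^4) =
      (∫ x, u x ^ 2 * u x ^ 2) + 2 * (∫ x, u x ^ 2 * u' x ^ 2) - (1/3) * ∫ x, u' x ^ 4 := by
    calc _ = ∫ x, (u x ^ 2 * u x ^ 2 + 2 * (u x ^ 2 * u' x ^ 2) - (1/3) * u' x ^ 4) := by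
          congr 1 with x
          ring
      _ = _ := by
          rw [integral_sub (iu4.fun_add (iuu'.const_mul 2)) (iu'4.const_mul _),
            integral_add iu4 (iuu'.const_mul 2), integral_const_mul, integral_const_mul]
  have hE : E = (∫ x, u x ^ 2) + ∫ x, u' x ^ 2 := integral_add iu2 iu'2
  have hu4 : ∫ x, u x ^ 2 * u x ^ 2 ≤ E * ∫ x, u x ^ 2 := by
    rw [← integral_const_mul]
    exact integral_mono iu4 (iu2.const_mul E)
      fun x => mul_le_mul_of_nonneg_right (hsup x) (sq_nonneg _)
  have huu' : ∫ x, u x ^ 2 * u' x ^ 2 ≤ E * ∫ x, u' x ^ 2 := by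
    rw [← integral_const_mul]
    exact integral_mono iuu' (iu'2.const_mul E)
      fun x => mul_le_mul_of_nonneg_right (hsup x) (sq_nonneg _)
  have hA : 0 ≤ ∫ x, u x ^ 2 := integral_nonneg fun x => sq_nonneg _
  have hB : 0 ≤ ∫ x, u' x ^ 2 := integral_nonneg fun x => sq_nonneg _
  have hquartic : (∫ x, u x ^ 2 * u x ^ 2) + 2 * ∫ x, u x ^ 2 * u' x ^ 2 ≤ 2 * E ^ 2 := by
    nlinarith
  rw [hF]
  linarith

end

/-- **`L³` control of the derivative by the two energies.**
Let `u ∈ H¹(ℝ)` with weak derivative `u' ∈ L⁴(ℝ)`, and set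
`E := ∫ (u² + u'²)` and `F := ∫ (u⁴ + 2u²u'² − (1/3)u'⁴)`. Then
`‖u'‖³_{L³} = ∫ |u'|³ ≤ √(3E(2E² − F))`. -/
theorem deriv_L3_control (u u' : ℝ → ℝ)
    (h2 : MemLp u 2 volume) (h2' : MemLp u' 2 volume) (h4' : MemLp u' 4 volume)
    (hAC : ∀ x, u x = u 0 + ∫ y in (0:ℝ)..x, u' y)
    (E F : ℝ)
    (hE : E = ∫ x, ((u x)^2 + (u' x)^2))
    (hF : F = ∫ x, ((u x)^4 + 2 * (u x)^2 * (u' x)^2 - (1/3) * (u' x)^4)) :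
    (∫ x, |u' x|^3) ≤ Real.sqrt (3 * E * (2 * E^2 - F)) := by
  have hE0 : 0 ≤ E := hE ▸ integral_nonneg fun x => by positivity
  have hB : ∫ x, u' x ^ 2 ≤ E := hE ▸ integral_mono h2'.integrable_sq
    (h2.integrable_sq.add h2'.integrable_sq) fun x => le_add_of_nonneg_left (sq_nonneg (u x))
  have hD : ∫ x, u' x ^ 4 ≤ 3 * (2 * E ^ 2 - F) :=
    hE ▸ hF ▸ integral_deriv_pow_four_le h2 h2' hAC h4'
  calc (∫ x, |u' x| ^ 3) ≤ √(∫ x, u' x ^ 2) * √(∫ x, u' x ^ 4) :=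
        integral_abs_pow_three_le_sqrt_mul_sqrt h2' h4'
    _ ≤ √E * √(3 * (2 * E ^ 2 - F)) := by gcongr
    _ = √(3 * E * (2 * E ^ 2 - F)) := by rw [← Real.sqrt_mul hE0, ← mul_assoc, mul_comm E 3]
end

section
/- Let μ be a finite nonnegative Borel measure on ℝ. Then for every β ∈ ℝ there exists a unique x = x(β) ∈ ℝ such that x + μ((−∞, x)) ≤ β ≤ x + μ((−∞, x]), and the resulting map β ↦ x(β) is nondecreasing and Lipschitz continuous with Lipschitz constant 1; indeed for β₁ < β₂ one has x(β₂) − x(β₁) + μ( (x(β₁), x(β₂)) ) ≤ β₂ − β₁. -/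
/-!
The map `f x = x + μ((−∞,x])` is strictly increasing and right-continuous, with left limit
`x + μ((−∞,x))` at `x`; hence `x(β) = sup {x | f x ≤ β}` satisfies
`x + μ((−∞,x)) ≤ β ≤ f x`. Since `a < b` forces `f a < b + μ((−∞,b))`, solutions for
`β₁ ≤ β₂` are ordered, which gives uniqueness and monotonicity. For `x₁ < x₂` the half-line
`(−∞,x₂)` is the disjoint union of `(−∞,x₁]` and `(x₁,x₂)`, so subtracting `β₁ ≤ f x₁` from
`x₂ + μ((−∞,x₂)) ≤ β₂` gives the estimate, and with it the Lipschitz bound.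
-/

open MeasureTheory Set Filter Topology

namespace MeasureTheory

theorem tendsto_measure_Iic_nhdsLT (μ : Measure ℝ) (x : ℝ) :
    Tendsto (fun y => μ (Iic y)) (𝓝[<] x) (𝓝 (μ (Iio x))) := by
  have hmono : Monotone fun y => μ (Iic y) := fun _ _ h => measure_mono (Iic_subset_Iic.2 h)
  convert hmono.tendsto_nhdsLT x using 2
  have hunion : Iio x = ⋃ y : Iio x, Iic (y : ℝ) := by
    ext z
    simp only [mem_Iio, mem_iUnion, mem_Iic, Subtype.exists, exists_prop]
    exact ⟨fun h => ⟨z, h, le_rfl⟩, fun ⟨y, hy, hzy⟩ => hzy.trans_lt hy⟩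
  have hIic : Monotone fun y : Iio x => Iic (y : ℝ) := fun _ _ h => Iic_subset_Iic.2 h
  rw [sSup_image', ← hIic.measure_iUnion, ← hunion]

theorem tendsto_measure_Iic_nhdsGT (μ : Measure ℝ) [IsFiniteMeasure μ] (x : ℝ) :
    Tendsto (fun y => μ (Iic y)) (𝓝[>] x) (𝓝 (μ (Iic x))) := by
  have hinter : ⋂ r > x, Iic r = Iic x := by
    ext z
    simp only [mem_iInter, mem_Iic]
    exact ⟨fun h => le_of_forall_gt_imp_ge_of_dense h, fun h r hr => h.trans hr.le⟩
  rw [← hinter]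
  exact tendsto_measure_biInter_gt (fun _ _ => measurableSet_Iic.nullMeasurableSet)
    (fun _ _ _ h => Iic_subset_Iic.2 h) ⟨x + 1, by linarith, measure_ne_top μ _⟩

namespace Measure

variable (μ : Measure ℝ)

def IsGenInv (β x : ℝ) : Prop :=
  x + μ.real (Iio x) ≤ β ∧ β ≤ x + μ.real (Iic x)

noncomputable def genInv (β : ℝ) : ℝ :=
  sSup {x | x + μ.real (Iic x) ≤ β}

variable {μ} [IsFiniteMeasure μ]

theorem add_measureReal_Iic_lt_add_measureReal_Iio {a b : ℝ} (h : a < b) :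
    a + μ.real (Iic a) < b + μ.real (Iio b) :=
  add_lt_add_of_lt_of_le h (measureReal_mono fun _ hx => lt_of_le_of_lt hx h)

theorem add_measureReal_Iio_le_of_forall_lt {x β : ℝ}
    (h : ∀ y < x, y + μ.real (Iic y) ≤ β) : x + μ.real (Iio x) ≤ β := by
  have hlim : Tendsto (fun y => y + μ.real (Iic y)) (𝓝[<] x) (𝓝 (x + μ.real (Iio x))) :=
    tendsto_nhdsWithin_of_tendsto_nhds tendsto_id |>.add
      ((ENNReal.tendsto_toReal (measure_ne_top μ _)).comp (tendsto_measure_Iic_nhdsLT μ x))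
  exact le_of_tendsto hlim (eventually_nhdsWithin_of_forall h)

theorem le_add_measureReal_Iic_of_forall_gt {x β : ℝ}
    (h : ∀ y > x, β ≤ y + μ.real (Iic y)) : β ≤ x + μ.real (Iic x) := by
  have hlim : Tendsto (fun y => y + μ.real (Iic y)) (𝓝[>] x) (𝓝 (x + μ.real (Iic x))) :=
    tendsto_nhdsWithin_of_tendsto_nhds tendsto_id |>.add
      ((ENNReal.tendsto_toReal (measure_ne_top μ _)).comp (tendsto_measure_Iic_nhdsGT μ x))
  exact ge_of_tendsto hlim (eventually_nhdsWithin_of_forall h)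

theorem IsGenInv.le_of_le {β₁ β₂ x₁ x₂ : ℝ} (h₁ : μ.IsGenInv β₁ x₁) (h₂ : μ.IsGenInv β₂ x₂)
    (hβ : β₁ ≤ β₂) : x₁ ≤ x₂ := by
  by_contra! hx
  linarith [add_measureReal_Iic_lt_add_measureReal_Iio (μ := μ) hx, h₁.1, h₂.2]

theorem IsGenInv.unique {β x₁ x₂ : ℝ} (h₁ : μ.IsGenInv β x₁) (h₂ : μ.IsGenInv β x₂) :
    x₁ = x₂ :=
  (h₁.le_of_le h₂ le_rfl).antisymm (h₂.le_of_le h₁ le_rfl)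

theorem IsGenInv.sub_add_measureReal_Ioo_le {β₁ β₂ x₁ x₂ : ℝ} (h₁ : μ.IsGenInv β₁ x₁)
    (h₂ : μ.IsGenInv β₂ x₂) (hβ : β₁ ≤ β₂) :
    x₂ - x₁ + μ.real (Ioo x₁ x₂) ≤ β₂ - β₁ := by
  rcases (h₁.le_of_le h₂ hβ).eq_or_lt with rfl | hx
  · simp [hβ]
  · have hsplit : μ.real (Iio x₂) = μ.real (Iic x₁) + μ.real (Ioo x₁ x₂) := by
      rw [← Iic_union_Ioo_eq_Iio hx,
        measureReal_union (Iic_disjoint_Ioi le_rfl |>.mono_right Ioo_subset_Ioi_self)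
          measurableSet_Ioo]
    linarith [h₁.2, h₂.1]

theorem isGenInv_genInv (β : ℝ) : μ.IsGenInv β (μ.genInv β) := by
  set S := {x | x + μ.real (Iic x) ≤ β}
  have hne : S.Nonempty :=
    ⟨β - μ.real univ, by
      change _ ≤ β
      linarith [measureReal_mono (μ := μ) (subset_univ (Iic (β - μ.real univ)))]⟩
  have hbdd : BddAbove S :=
    ⟨β, fun x (hx : _ ≤ β) => by linarith [measureReal_nonneg (μ := μ) (s := Iic x)]⟩
  refine ⟨add_measureReal_Iio_le_of_forall_lt fun y hy => ?_,
    le_add_measureReal_Iic_of_forall_gt fun y hy => ?_⟩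
  · obtain ⟨z, hzS, hyz⟩ := exists_lt_of_lt_csSup hne hy
    exact (add_le_add hyz.le (measureReal_mono (Iic_subset_Iic.2 hyz.le))).trans hzS
  · exact (not_le.1 fun hyS => (le_csSup hbdd hyS).not_gt hy).le

theorem monotone_genInv : Monotone μ.genInv :=
  fun _ _ hβ => (isGenInv_genInv _).le_of_le (isGenInv_genInv _) hβ

theorem lipschitzWith_one_genInv : LipschitzWith 1 μ.genInv := by
  refine LipschitzWith.of_le_add_mul 1 fun β₁ β₂ => ?_
  rw [NNReal.coe_one, one_mul]
  rcases le_total β₁ β₂ with hβ | hβ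
  · linarith [monotone_genInv (μ := μ) hβ, dist_nonneg (x := β₁) (y := β₂)]
  · have := (isGenInv_genInv (μ := μ) β₂).sub_add_measureReal_Ioo_le (isGenInv_genInv β₁) hβ
    rw [Real.dist_eq, abs_of_nonneg (sub_nonneg.2 hβ)]
    linarith [measureReal_nonneg (μ := μ) (s := Ioo (μ.genInv β₂) (μ.genInv β₁))]

end Measure

end MeasureTheory

/-- **The generalized inverse of `x ↦ x + μ((−∞,x])` is well defined and
`1`-Lipschitz.** Let `μ` be a finite nonnegative Borel measure on `ℝ`. Then for every
`β ∈ ℝ` there is a unique `x(β)` with `x + μ((−∞,x)) ≤ β ≤ x + μ((−∞,x])`, and the map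
`β ↦ x(β)` is nondecreasing and Lipschitz with constant `1`; indeed for `β₁ < β₂` one
has `x(β₂) − x(β₁) + μ((x(β₁), x(β₂))) ≤ β₂ − β₁`. -/
theorem generalized_inverse_lipschitz (μ : Measure ℝ) [IsFiniteMeasure μ] :
    ∃ xm : ℝ → ℝ,
      (∀ β : ℝ, xm β + (μ (Iio (xm β))).toReal ≤ β
        ∧ β ≤ xm β + (μ (Iic (xm β))).toReal) ∧
      (∀ β y : ℝ, (y + (μ (Iio y)).toReal ≤ β ∧ β ≤ y + (μ (Iic y)).toReal) →
        y = xm β) ∧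
      Monotone xm ∧ LipschitzWith 1 xm ∧
      (∀ β₁ β₂ : ℝ, β₁ < β₂ →
        xm β₂ - xm β₁ + (μ (Ioo (xm β₁) (xm β₂))).toReal ≤ β₂ - β₁) :=
  ⟨μ.genInv, μ.isGenInv_genInv,
    fun β _ hy => Measure.IsGenInv.unique hy (μ.isGenInv_genInv β),
    μ.monotone_genInv, μ.lipschitzWith_one_genInv,
    fun β₁ β₂ hβ =>
      (μ.isGenInv_genInv β₁).sub_add_measureReal_Ioo_le (μ.isGenInv_genInv β₂) hβ.le⟩
end
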